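/- arXiv:math/9903002 — 2 statements merged into one kernel-verified Lean document; each statement's English description precedes it below -/
import Mathlib

section
/- Let M be a real analytic manifold, Γ a group acting on M by real analytic diffeomorphisms via ρ: Γ → Diff^ω(M), with a fixed point x₀, and let r: Γ → GL(T_{x₀}M) be the infinitesimal representation at x₀. Suppose ρ is analytically linearizable at x₀, i.e. there is a real analytic diffeomorphism φ: U → V from an open neighborhood U of 0 in T_{x₀}M onto an open neighborhood V of x₀ with φ(0)=x₀ such that for every γ ∈ Γ one has φ∘r(γ) = ρ(γ)∘φ on some neighborhood of 0 (depending on γ). Then among all open subsets of T_{x₀}M that are star-shaped with respect to 0 and on which φ extends analytically to a local diffeomorphism onto its image, there is a unique maximal one ℰ; this ℰ is invariant under r, and the extension φ̄ of φ to ℰ satisfies the global semi-conjugacy φ̄(r(γ)u) = ρ(γ)(φ̄(u)) for all γ ∈ Γ and all u ∈ ℰ. -/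
/-!
Extensions of the germ of `φ` at `0` to analytic local diffeomorphisms on star-shaped open
neighbourhoods of `0` agree wherever two of them are defined: the overlap is star-shaped,
hence connected, and the identity theorem applies. They therefore glue to one such extension `φ̄` on
the union `ℰ` of all their domains, which is the largest domain. For `γ ∈ Γ`, linearity of
`r γ` and the local conjugacy `φ ∘ r γ = ρ γ ∘ φ` near `0` make `ρ γ ∘ ψ ∘ (r γ)⁻¹` an extension
of the same kind on `r γ '' s` whenever `ψ` is one on `s`; so `ℰ` is `r`-invariant, and since
extensions agree, `φ̄ ∘ r γ = ρ γ ∘ φ̄` on `ℰ`.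
-/

open Set Filter Topology MeasureTheory Matrix Function
noncomputable section
namespace Zeghib

/-- `ℝⁿ` (with the sup norm; the choice of norm is irrelevant). -/
abbrev V (n : ℕ) : Type := Fin n → ℝ

section Charted

variable (E : Type*) [NormedAddCommGroup E] [NormedSpace ℝ E]
variable (E' : Type*) [NormedAddCommGroup E'] [NormedSpace ℝ E']
variable {M : Type*} [TopologicalSpace M] [ChartedSpace E M]
variable {M' : Type*} [TopologicalSpace M'] [ChartedSpace E' M']

/-- A map between charted spaces (over real normed vector spaces) is real analytic at a
point if it is continuous there and its representative in the preferred charts is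
real analytic. -/
def CAnalyticAt (f : M → M') (x : M) : Prop :=
  ContinuousAt f x ∧
    AnalyticAt ℝ ((chartAt E' (f x)) ∘ f ∘ (chartAt E x).symm) (chartAt E x x)

def CAnalyticOn (f : M → M') (s : Set M) : Prop := ∀ x ∈ s, CAnalyticAt E E' f x

def CAnalytic (f : M → M') : Prop := ∀ x, CAnalyticAt E E' f x

/-- A charted space is a real analytic manifold when all its transition maps are
real analytic. -/
def AnalyticCharts (M : Type*) [TopologicalSpace M] [ChartedSpace E M] : Prop :=
  ∀ x y : M, ∀ z ∈ ((chartAt E x).symm.trans (chartAt E y)).source,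
    AnalyticAt ℝ ((chartAt E y) ∘ (chartAt E x).symm) z

/-- `f` is, on `s`, a local analytic diffeomorphism (onto its image). -/
def LocalAnaDiffeoOn (f : M → M') (s : Set M) : Prop :=
  ∀ x ∈ s, ∃ U : Set M, IsOpen U ∧ x ∈ U ∧ U ⊆ s ∧ InjOn f U ∧ IsOpen (f '' U) ∧
    CAnalyticOn E E' f U ∧ ∃ g : M' → M, LeftInvOn g f U ∧ CAnalyticOn E' E g (f '' U)

/-- `f` restricted to `s` is a covering map onto its image. -/
def IsCoveringOntoImage (f : M → M') (s : Set M) : Prop :=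
  ∀ y ∈ f '' s, ∃ W : Set M', IsOpen W ∧ y ∈ W ∧
    ∃ (ι : Type) (U : ι → Set M), (∀ i, IsOpen (U i)) ∧
      Pairwise (Function.onFun Disjoint U) ∧ (s ∩ f ⁻¹' W = ⋃ i, U i) ∧
      ∀ i, BijOn f (U i) W

/-- An equivalence which is a real analytic diffeomorphism. -/
def IsAnaDiffeo (h : M ≃ M') : Prop := CAnalytic E E' h ∧ CAnalytic E' E h.symm

end Charted

/-- Star-shapedness with respect to the origin. -/
def StarShapedZero {n : ℕ} (s : Set (V n)) : Prop :=
  ∀ u ∈ s, ∀ t ∈ Icc (0:ℝ) 1, t • u ∈ s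

/-- `φ` extends, from a neighborhood of `0`, to an analytic local diffeomorphism
(onto its image) defined on `s`. -/
def ExtendsAsLocalAnaDiffeo {n : ℕ} {M : Type*} [TopologicalSpace M] [ChartedSpace (V n) M]
    (φ : V n → M) (s : Set (V n)) : Prop :=
  ∃ ψ : V n → M, (∀ᶠ u in 𝓝 (0 : V n), ψ u = φ u) ∧ LocalAnaDiffeoOn (V n) (V n) ψ s

/-- `(ℳ, Φ)` is an extension of the germ of the linearizing map `φ` to a connected
`r`-invariant open neighborhood `ℳ` of `0`, as an analytic local diffeomorphism
semi-conjugating the linear action `r` to the action `ρ`. -/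
def GoodExt {n : ℕ} {Γ : Type*} {M : Type*} [TopologicalSpace M] [ChartedSpace (V n) M]
    (r : Γ → V n → V n) (ρ : Γ → M → M) (φ : V n → M)
    (ℳ : Set (V n)) (Φ : V n → M) : Prop :=
  IsOpen ℳ ∧ IsConnected ℳ ∧ (0 : V n) ∈ ℳ ∧
  (∀ γ, ∀ u ∈ ℳ, r γ u ∈ ℳ) ∧
  (∀ᶠ u in 𝓝 (0 : V n), Φ u = φ u) ∧
  LocalAnaDiffeoOn (V n) (V n) Φ ℳ ∧
  (∀ γ, ∀ u ∈ ℳ, Φ (r γ u) = ρ γ (Φ u))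

/-- `φ` is an analytic diffeomorphism from an open neighborhood of `0 ∈ ℝⁿ` onto an open
neighborhood of its image, sending `0` to `x₀`. -/
def IsLocalLinearization {n : ℕ} {M : Type*} [TopologicalSpace M] [ChartedSpace (V n) M]
    (φ : V n → M) (x₀ : M) : Prop :=
  φ 0 = x₀ ∧
  ∃ U : Set (V n), IsOpen U ∧ (0 : V n) ∈ U ∧ InjOn φ U ∧ IsOpen (φ '' U) ∧
    CAnalyticOn (V n) (V n) φ U ∧
    ∃ ψ : M → V n, LeftInvOn ψ φ U ∧ CAnalyticOn (V n) (V n) ψ (φ '' U)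

section ChartedAnalytic

variable {E E' E'' : Type*} [NormedAddCommGroup E] [NormedSpace ℝ E]
  [NormedAddCommGroup E'] [NormedSpace ℝ E'] [NormedAddCommGroup E''] [NormedSpace ℝ E'']
  {M : Type*} [TopologicalSpace M] [ChartedSpace E M]
  {M' : Type*} [TopologicalSpace M'] [ChartedSpace E' M']
  {M'' : Type*} [TopologicalSpace M''] [ChartedSpace E'' M'']

lemma canalyticAt_self_iff {f : E → E'} {x : E} :
    CAnalyticAt E E' f x ↔ AnalyticAt ℝ f x := by
  simp only [CAnalyticAt, chartAt_self_eq, OpenPartialHomeomorph.refl_apply,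
    OpenPartialHomeomorph.refl_symm, id_comp, comp_id]
  exact ⟨And.right, fun h => ⟨h.continuousAt, h⟩⟩

lemma CAnalyticAt.comp {g : M' → M''} {f : M → M'} {x : M}
    (hg : CAnalyticAt E' E'' g (f x)) (hf : CAnalyticAt E E' f x) :
    CAnalyticAt E E'' (g ∘ f) x := by
  refine ⟨hg.1.comp hf.1, ?_⟩
  have hfx : ((chartAt E' (f x)) ∘ f ∘ (chartAt E x).symm) (chartAt E x x) =
      chartAt E' (f x) (f x) := by
    simp [(chartAt E x).left_inv (mem_chart_source E x)]
  have hg' := hg.2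
  rw [← hfx] at hg'
  refine (hg'.comp hf.2).congr ?_
  have hsource : ∀ᶠ z in 𝓝 (chartAt E x x),
      f ((chartAt E x).symm z) ∈ (chartAt E' (f x)).source :=
    (hf.1.tendsto.comp ((chartAt E x).tendsto_symm (mem_chart_source E x))).eventually
      ((chartAt E' (f x)).open_source.mem_nhds (mem_chart_source E' (f x)))
  filter_upwards [hsource] with z hz
  simp only [Function.comp_apply, (chartAt E' (f x)).left_inv hz]

lemma CAnalyticAt.congr {f g : M → M'} {x : M} (hf : CAnalyticAt E E' f x)
    (h : f =ᶠ[𝓝 x] g) : CAnalyticAt E E' g x := by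
  refine ⟨hf.1.congr h, ?_⟩
  rw [← h.eq_of_nhds]
  exact hf.2.congr
    ((h.comp_tendsto ((chartAt E x).tendsto_symm (mem_chart_source E x))).fun_comp _)

lemma CAnalyticAt.mdifferentiableAt {f : M → M'} {x : M} (h : CAnalyticAt E E' f x) :
    MDifferentiableAt (modelWithCornersSelf ℝ E) (modelWithCornersSelf ℝ E') f x := by
  rw [mdifferentiableAt_iff]
  refine ⟨h.1, ?_⟩
  simp only [writtenInExtChartAt, extChartAt, OpenPartialHomeomorph.extend,
    modelWithCornersSelf_partialEquiv, PartialEquiv.trans_refl, modelWithCornersSelf_coe, range_id]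
  exact h.2.differentiableAt.differentiableWithinAt

lemma CAnalyticAt.eventuallyEq_of_mem_closure [CompleteSpace E'] [T2Space M'] {f g : E → M'}
    {u : E}    (hf : CAnalyticAt E E' f u) (hg : CAnalyticAt E E' g u)
    (hu : u ∈ closure {v | f =ᶠ[𝓝 v] g}) : f =ᶠ[𝓝 u] g := by
  have := mem_closure_iff_nhdsWithin_neBot.1 hu
  have hfgu : f u = g u :=
    tendsto_nhds_unique_of_eventuallyEq (l := 𝓝[{v | f =ᶠ[𝓝 v] g}] u)
      (hf.1.tendsto.mono_left nhdsWithin_le_nhds)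
      (hg.1.tendsto.mono_left nhdsWithin_le_nhds)
      (eventually_nhdsWithin_of_forall fun v (hv : f =ᶠ[𝓝 v] g) => hv.eq_of_nhds)
  set c := chartAt E' (f u)
  have hF : AnalyticAt ℝ (c ∘ f) u := by simpa [chartAt_self_eq] using hf.2
  have hG : AnalyticAt ℝ (c ∘ g) u := by simpa [c, hfgu, chartAt_self_eq] using hg.2
  have hsource : ∀ᶠ v in 𝓝 u, f v ∈ c.source ∧ g v ∈ c.source :=
    (hf.1.eventually (c.open_source.mem_nhds (mem_chart_source E' (f u)))).and
      (hg.1.eventually (c.open_source.mem_nhds (hfgu ▸ mem_chart_source E' (f u))))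
  obtain ⟨ε, hε, hball⟩ := Metric.mem_nhds_iff.1
    ((hsource.and hF.eventually_analyticAt).and hG.eventually_analyticAt)
  obtain ⟨w, hwball, hw⟩ := mem_closure_iff_nhds.1 hu _ (Metric.ball_mem_nhds u hε)
  have hcfg : EqOn (c ∘ f) (c ∘ g) (Metric.ball u ε) :=
    AnalyticOnNhd.eqOn_of_preconnected_of_eventuallyEq (fun v hv => (hball hv).1.2)
      (fun v hv => (hball hv).2) (convex_ball u ε).isPreconnected hwball (hw.fun_comp c)
  filter_upwards [Metric.ball_mem_nhds u hε] with v hv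
  exact c.injOn (hball hv).1.1.1 (hball hv).1.1.2 (hcfg hv)

lemma eqOn_of_canalyticAt_of_eventuallyEq [CompleteSpace E'] [T2Space M'] {f g : E → M'}
    {s : Set E} (hs : IsPreconnected s) (hf : ∀ u ∈ s, CAnalyticAt E E' f u)
    (hg : ∀ u ∈ s, CAnalyticAt E E' g u) {z₀ : E} (hz₀ : z₀ ∈ s) (h : f =ᶠ[𝓝 z₀] g) :
    EqOn f g s := by
  have hgerm : s ⊆ {v | f =ᶠ[𝓝 v] g} :=
    hs.subset_of_closure_inter_subset isOpen_setOfPred_eventually_nhds ⟨z₀, hz₀, h⟩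
      fun u ⟨hu, hus⟩ => (hf u hus).eventuallyEq_of_mem_closure (hg u hus) hu
  exact fun u hu => (hgerm hu).eq_of_nhds

end ChartedAnalytic

section LocalAnaDiffeo

variable {E E' E'' : Type*} [NormedAddCommGroup E] [NormedSpace ℝ E]
  [NormedAddCommGroup E'] [NormedSpace ℝ E'] [NormedAddCommGroup E''] [NormedSpace ℝ E'']
  {M : Type*} [TopologicalSpace M] [ChartedSpace E M]
  {M' : Type*} [TopologicalSpace M'] [ChartedSpace E' M']
  {M'' : Type*} [TopologicalSpace M''] [ChartedSpace E'' M'']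

lemma IsAnaDiffeo.continuous {h : M ≃ M'} (hh : IsAnaDiffeo E E' h) : Continuous h :=
  continuous_iff_continuousAt.2 fun x => (hh.1 x).1

lemma IsAnaDiffeo.symm {h : M ≃ M'} (hh : IsAnaDiffeo E E' h) : IsAnaDiffeo E' E h.symm :=
  ⟨hh.2, hh.1⟩

lemma isAnaDiffeo_continuousLinearEquiv (A : E ≃L[ℝ] E') : IsAnaDiffeo E E' A.toEquiv :=
  ⟨fun x => canalyticAt_self_iff.2 ((A : E →L[ℝ] E').analyticAt x),
    fun x => canalyticAt_self_iff.2 ((A.symm : E' →L[ℝ] E).analyticAt x)⟩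

lemma localAnaDiffeoOn_of_leftInvOn {f : M → M'} {g : M' → M} {U : Set M} (hU : IsOpen U)
    (himage : IsOpen (f '' U)) (hf : CAnalyticOn E E' f U) (hgf : LeftInvOn g f U)
    (hg : CAnalyticOn E' E g (f '' U)) : LocalAnaDiffeoOn E E' f U :=
  fun _ hx => ⟨U, hU, hx, subset_rfl, hgf.injOn, himage, hf, g, hgf, hg⟩

lemma LocalAnaDiffeoOn.canalyticAt {f : M → M'} {s : Set M} (hf : LocalAnaDiffeoOn E E' f s)
    {x : M} (hx : x ∈ s) : CAnalyticAt E E' f x := by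
  obtain ⟨U, -, hxU, -, -, -, hfU, -⟩ := hf x hx
  exact hfU x hxU

lemma LocalAnaDiffeoOn.mono {f : M → M'} {s t : Set M} (hf : LocalAnaDiffeoOn E E' f s)
    (hts : t ⊆ s) (ht : IsOpen t) : LocalAnaDiffeoOn E E' f t := by
  intro x hx
  obtain ⟨U, hU, hxU, -, hinj, himage, hfU, g, hgf, hg⟩ := hf x (hts hx)
  have hgcont : ContinuousOn g (f '' U) := fun y hy => (hg y hy).1.continuousWithinAt
  refine ⟨t ∩ U, ht.inter hU, ⟨hx, hxU⟩, inter_subset_left, hinj.mono inter_subset_right, ?_,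
    fun y hy => hfU y hy.2, g, hgf.mono inter_subset_right,
    fun y hy => hg y (image_mono inter_subset_right hy)⟩
  rw [hgf.image_inter', inter_comm]
  exact hgcont.isOpen_inter_preimage himage ht

lemma LocalAnaDiffeoOn.congr {f g : M → M'} {s : Set M} (hf : LocalAnaDiffeoOn E E' f s)
    (hfg : EqOn f g s) : LocalAnaDiffeoOn E E' g s := by
  intro x hx
  obtain ⟨U, hU, hxU, hUs, hinj, himage, hfU, k, hkf, hk⟩ := hf x hx
  have hfgU : EqOn f g U := hfg.mono hUs
  refine ⟨U, hU, hxU, hUs, hinj.congr hfgU, hfgU.image_eq ▸ himage,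
    fun y hy => (hfU y hy).congr (eventually_of_mem (hU.mem_nhds hy) hfgU), k,
    fun y hy => hfgU hy ▸ hkf hy, hfgU.image_eq ▸ hk⟩

lemma LocalAnaDiffeoOn.anaDiffeo_comp {h : M' ≃ M''} (hh : IsAnaDiffeo E' E'' h) {f : M → M'}
    {s : Set M} (hf : LocalAnaDiffeoOn E E' f s) : LocalAnaDiffeoOn E E'' (h ∘ f) s := by
  intro x hx
  obtain ⟨U, hU, hxU, hUs, hinj, himage, hfU, g, hgf, hg⟩ := hf x hx
  have himage' : (h ∘ f) '' U = h.symm ⁻¹' (f '' U) := by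
    rw [image_comp, h.image_eq_preimage_symm]
  refine ⟨U, hU, hxU, hUs, h.injective.comp_injOn hinj, ?_,
    fun y hy => (hh.1 (f y)).comp (hfU y hy), g ∘ h.symm,
    fun y hy => by simp [hgf hy], ?_⟩
  · rw [himage']
    exact himage.preimage hh.symm.continuous
  · rw [himage']
    intro y hy
    exact (hg _ hy).comp (hh.2 y)

lemma LocalAnaDiffeoOn.comp_anaDiffeo {h : M ≃ M'} (hh : IsAnaDiffeo E E' h) {f : M' → M''}
    {s : Set M'} (hf : LocalAnaDiffeoOn E' E'' f s) : LocalAnaDiffeoOn E E'' (f ∘ h) (h ⁻¹' s) := by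
  intro x hx
  obtain ⟨U, hU, hxU, hUs, hinj, himage, hfU, g, hgf, hg⟩ := hf (h x) hx
  have himage' : (f ∘ h) '' (h ⁻¹' U) = f '' U := by
    rw [image_comp, h.image_preimage]
  refine ⟨h ⁻¹' U, hU.preimage hh.continuous, hxU, preimage_mono hUs,
    hinj.comp h.injective.injOn fun _ hy => hy, himage'.symm ▸ himage,
    fun y hy => (hfU (h y) hy).comp (hh.1 y), h.symm ∘ g,
    fun y hy => by simp [hgf hy], ?_⟩
  rw [himage']
  exact fun y hy => (hh.2 (g y)).comp (hg y hy)

end LocalAnaDiffeo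

lemma starShapedZero_iff_starConvex {n : ℕ} {s : Set (V n)} :
    StarShapedZero s ↔ StarConvex ℝ 0 s := by
  rw [starConvex_zero_iff]
  exact ⟨fun h _ hx _ ha₀ ha₁ => h _ hx _ ⟨ha₀, ha₁⟩, fun h _ hx _ ha => h hx ha.1 ha.2⟩

section MaximalExtension

variable {n : ℕ} {M : Type*} [TopologicalSpace M] [ChartedSpace (V n) M] {φ ψ : V n → M}
  {s : Set (V n)}

structure IsStarExtension (φ ψ : V n → M) (s : Set (V n)) : Prop where
  starShaped : StarShapedZero s
  isOpen : IsOpen s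
  zero_mem : (0 : V n) ∈ s
  eventually_eq : ∀ᶠ u in 𝓝 (0 : V n), ψ u = φ u
  localAnaDiffeoOn : LocalAnaDiffeoOn (V n) (V n) ψ s

lemma exists_isStarExtension_iff :
    (∃ ψ, IsStarExtension φ ψ s) ↔
      StarShapedZero s ∧ IsOpen s ∧ (0 : V n) ∈ s ∧ ExtendsAsLocalAnaDiffeo φ s :=
  ⟨fun ⟨ψ, h⟩ => ⟨h.1, h.2, h.3, ψ, h.4, h.5⟩,
    fun ⟨h₁, h₂, h₃, ψ, h₄, h₅⟩ => ⟨ψ, h₁, h₂, h₃, h₄, h₅⟩⟩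

def maxExtDomain (φ : V n → M) : Set (V n) :=
  {u | ∃ p : (V n → M) × Set (V n), IsStarExtension φ p.1 p.2 ∧ u ∈ p.2}

open Classical in
/-- At `u ∈ maxExtDomain φ` all star extensions defined at `u` agree (`IsStarExtension.eqOn`),
so the chosen one is irrelevant; outside, the value `φ u` is junk. -/
def maxExt (φ : V n → M) (u : V n) : M :=
  if h : u ∈ maxExtDomain φ then h.choose.1 u else φ u

lemma IsStarExtension.subset_maxExtDomain (h : IsStarExtension φ ψ s) : s ⊆ maxExtDomain φ :=
  fun _ hu => ⟨(ψ, s), h, hu⟩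

/-- Identity theorem on the intersection of the domains, which is star-shaped, hence
connected. -/
lemma IsStarExtension.eqOn [T2Space M] {ψ' : V n → M} {s' : Set (V n)}
    (h : IsStarExtension φ ψ s) (h' : IsStarExtension φ ψ' s') : EqOn ψ ψ' (s ∩ s') := by
  have hconv : StarConvex ℝ 0 (s ∩ s') :=
    (starShapedZero_iff_starConvex.1 h.starShaped).inter
      (starShapedZero_iff_starConvex.1 h'.starShaped)
  exact eqOn_of_canalyticAt_of_eventuallyEq
    (hconv.isPathConnected ⟨h.zero_mem, h'.zero_mem⟩).isConnected.isPreconnected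
    (fun u hu => h.localAnaDiffeoOn.canalyticAt hu.1)
    (fun u hu => h'.localAnaDiffeoOn.canalyticAt hu.2) ⟨h.zero_mem, h'.zero_mem⟩
    (EventuallyEq.trans h.eventually_eq (EventuallyEq.symm h'.eventually_eq))

lemma IsStarExtension.eqOn_maxExt [T2Space M] (h : IsStarExtension φ ψ s) :
    EqOn (maxExt φ) ψ s := by
  intro u hu
  have hu' : u ∈ maxExtDomain φ := h.subset_maxExtDomain hu
  rw [maxExt, dif_pos hu']
  exact hu'.choose_spec.1.eqOn h ⟨hu'.choose_spec.2, hu⟩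

lemma isStarExtension_maxExt [T2Space M] (h : IsStarExtension φ ψ s) :
    IsStarExtension φ (maxExt φ) (maxExtDomain φ) where
  starShaped := fun _ ⟨p, hp, hu⟩ t ht => ⟨p, hp, hp.starShaped _ hu t ht⟩
  isOpen := isOpen_iff_forall_mem_open.2 fun _ ⟨p, hp, hu⟩ =>
    ⟨p.2, hp.subset_maxExtDomain, hp.isOpen, hu⟩
  zero_mem := h.subset_maxExtDomain h.zero_mem
  eventually_eq := by
    filter_upwards [h.isOpen.mem_nhds h.zero_mem, h.eventually_eq] with u hu hψu
    rw [h.eqOn_maxExt hu, hψu]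
  localAnaDiffeoOn := by
    rintro u ⟨p, hp, hu⟩
    obtain ⟨U, hU, huU, hUs, hrest⟩ := hp.localAnaDiffeoOn.congr hp.eqOn_maxExt.symm u hu
    exact ⟨U, hU, huU, hUs.trans hp.subset_maxExtDomain, hrest⟩

lemma IsStarExtension.conj {A : V n ≃L[ℝ] V n} {h : M ≃ M} (hh : IsAnaDiffeo (V n) (V n) h)
    (hφ : ∀ᶠ u in 𝓝 (0 : V n), φ (A u) = h (φ u)) (hψ : IsStarExtension φ ψ s) :
    IsStarExtension φ (h ∘ ψ ∘ A.symm) (A '' s) where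
  starShaped := by
    rw [starShapedZero_iff_starConvex]
    simpa using
      (starShapedZero_iff_starConvex.1 hψ.starShaped).linear_image (A : V n →ₗ[ℝ] V n)
  isOpen := A.isOpenMap s hψ.isOpen
  zero_mem := ⟨0, hψ.zero_mem, map_zero A⟩
  eventually_eq := by
    have hA : Tendsto A.symm (𝓝 0) (𝓝 0) := A.symm.continuous.tendsto' 0 0 (map_zero _)
    filter_upwards [hA.eventually hψ.eventually_eq, hA.eventually hφ] with u hψu hφu
    simp only [Function.comp_apply, hψu, ← hφu, ContinuousLinearEquiv.apply_symm_apply]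
  localAnaDiffeoOn := by
    rw [A.image_eq_preimage_symm]
    exact (hψ.localAnaDiffeoOn.comp_anaDiffeo
      (isAnaDiffeo_continuousLinearEquiv A.symm)).anaDiffeo_comp hh

lemma mapsTo_maxExtDomain [T2Space M] {A : V n ≃L[ℝ] V n} {h : M ≃ M}
    (hh : IsAnaDiffeo (V n) (V n) h) (hφ : ∀ᶠ u in 𝓝 (0 : V n), φ (A u) = h (φ u)) :
    MapsTo A (maxExtDomain φ) (maxExtDomain φ) := by
  rintro u ⟨p, hp, hu⟩
  exact (hp.conj hh hφ).subset_maxExtDomain (mem_image_of_mem A hu)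

lemma maxExt_semiconj [T2Space M] {A : V n ≃L[ℝ] V n} {h : M ≃ M}
    (hh : IsAnaDiffeo (V n) (V n) h) (hφ : ∀ᶠ u in 𝓝 (0 : V n), φ (A u) = h (φ u))
    {u : V n} (hu : u ∈ maxExtDomain φ) : maxExt φ (A u) = h (maxExt φ u) := by
  obtain ⟨p, hp, hu⟩ := hu
  rw [(hp.conj hh hφ).eqOn_maxExt (mem_image_of_mem A hu), hp.eqOn_maxExt hu]
  simp

lemma IsLocalLinearization.exists_isStarExtension {x₀ : M} (hφ : IsLocalLinearization φ x₀) :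
    ∃ s, IsStarExtension φ φ s := by
  obtain ⟨-, U, hU, h0U, -, himage, hφU, ψ, hψφ, hψ⟩ := hφ
  obtain ⟨ε, hε, hball⟩ := Metric.isOpen_iff.1 hU 0 h0U
  exact ⟨Metric.ball 0 ε, starShapedZero_iff_starConvex.2
      ((convex_ball 0 ε).starConvex (Metric.mem_ball_self hε)),
    Metric.isOpen_ball, Metric.mem_ball_self hε, Eventually.of_forall fun _ => rfl,
    (localAnaDiffeoOn_of_leftInvOn hU himage hφU hψφ hψ).mono hball Metric.isOpen_ball⟩

end MaximalExtension

section TangentRepresentation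

variable {E : Type*} [NormedAddCommGroup E] [NormedSpace ℝ E]
  {M : Type*} [TopologicalSpace M] [ChartedSpace E M] {Γ : Type*} [Group Γ]

def tangentRep (ρ : Γ →* Equiv.Perm M) (x₀ : M)
    (hρ : ∀ γ, MDifferentiableAt (modelWithCornersSelf ℝ E) (modelWithCornersSelf ℝ E) (ρ γ) x₀)
    (hfix : ∀ γ, ρ γ x₀ = x₀) : Γ →* (E ≃L[ℝ] E) :=
  (ContinuousLinearEquiv.unitsEquiv ℝ E).toMonoidHom.comp <| MonoidHom.toHomUnits
    { toFun := fun γ => mfderiv (modelWithCornersSelf ℝ E) (modelWithCornersSelf ℝ E) (ρ γ) x₀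
      map_one' := by
        rw [map_one, Equiv.Perm.coe_one, mfderiv_id]
        rfl
      map_mul' := fun γ δ => ContinuousLinearMap.ext fun u => by
        rw [map_mul, Equiv.Perm.coe_mul]
        exact mfderiv_comp_apply_of_eq (x := x₀) (hρ γ) (hρ δ) (hfix δ) u }

lemma isAnaDiffeo_of_forall_canalytic (ρ : Γ →* Equiv.Perm M)
    (hρ : ∀ γ, CAnalytic E E (ρ γ)) (γ : Γ) : IsAnaDiffeo E E (ρ γ) :=
  ⟨hρ γ, by rw [← Equiv.Perm.coe_inv, ← map_inv]; exact hρ γ⁻¹⟩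

end TangentRepresentation

theorem statement_0_general (n : ℕ) (Γ : Type*) [Group Γ]
    (M : Type*) [TopologicalSpace M] [T2Space M] [ChartedSpace (V n) M]
    (ρ : Γ →* Equiv.Perm M) (hρ : ∀ γ : Γ, CAnalytic (V n) (V n) ⇑(ρ γ))
    (x₀ : M) (hfix : ∀ γ : Γ, ρ γ x₀ = x₀)
    (r : Γ → V n → V n)
    (hr : ∀ γ : Γ, r γ = fun u =>
      mfderiv (modelWithCornersSelf ℝ (V n)) (modelWithCornersSelf ℝ (V n)) (ρ γ) x₀ u)
    (φ : V n → M) (hφ : IsLocalLinearization φ x₀)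
    (hconj : ∀ γ : Γ, ∀ᶠ u in 𝓝 (0 : V n), φ (r γ u) = ρ γ (φ u)) :
    ∃ ℰ : Set (V n),
      (StarShapedZero ℰ ∧ IsOpen ℰ ∧ (0 : V n) ∈ ℰ ∧ ExtendsAsLocalAnaDiffeo φ ℰ) ∧
      (∀ ℰ' : Set (V n), StarShapedZero ℰ' → IsOpen ℰ' → (0 : V n) ∈ ℰ' →
        ExtendsAsLocalAnaDiffeo φ ℰ' → ℰ' ⊆ ℰ) ∧
      (∀ γ : Γ, ∀ u ∈ ℰ, r γ u ∈ ℰ) ∧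
      ∃ φbar : V n → M, (∀ᶠ u in 𝓝 (0 : V n), φbar u = φ u) ∧
        LocalAnaDiffeoOn (V n) (V n) φbar ℰ ∧
        ∀ γ : Γ, ∀ u ∈ ℰ, φbar (r γ u) = ρ γ (φbar u) := by
  obtain ⟨s₀, hs₀⟩ := hφ.exists_isStarExtension
  have hmax := isStarExtension_maxExt hs₀
  set R := tangentRep ρ x₀ (fun γ => (hρ γ x₀).mdifferentiableAt) hfix
  have hRr : ∀ γ, ⇑(R γ) = r γ := fun γ => by
    rw [hr γ]
    rfl
  have hρ' := isAnaDiffeo_of_forall_canalytic ρ hρ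
  have hconj' : ∀ γ, ∀ᶠ u in 𝓝 (0 : V n), φ (R γ u) = ρ γ (φ u) := fun γ => by
    simpa only [hRr] using hconj γ
  refine ⟨maxExtDomain φ, exists_isStarExtension_iff.1 ⟨_, hmax⟩,
    fun ℰ' h₁ h₂ h₃ h₄ => ?_, fun γ u hu => ?_, maxExt φ, hmax.eventually_eq,
    hmax.localAnaDiffeoOn, fun γ u hu => ?_⟩
  · obtain ⟨ψ, hψ⟩ := exists_isStarExtension_iff.2 ⟨h₁, h₂, h₃, h₄⟩
    exact hψ.subset_maxExtDomain
  · rw [← hRr]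
    exact mapsTo_maxExtDomain (hρ' γ) (hconj' γ) hu
  · rw [← hRr]
    exact maxExt_semiconj (hρ' γ) (hconj' γ) hu

/-- Let `Γ` act real-analytically on a real analytic manifold `M` with a
fixed point `x₀`, with infinitesimal representation `r` at `x₀`, and suppose the action is
analytically linearizable at `x₀` via `φ`. Then among the star-shaped (with respect to
`0`) open subsets of `T_{x₀}M = ℝⁿ` on which `φ` extends analytically to a local
diffeomorphism onto its image there is a greatest one `ℰ`; it is `r`-invariant and the
extension `φ̄` of `φ` to `ℰ` globally semi-conjugates `r` to `ρ`. -/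
theorem statement_0 (n : ℕ) (Γ : Type*) [Group Γ]
    (M : Type*) [TopologicalSpace M] [T2Space M] [ChartedSpace (V n) M]
    (hM : AnalyticCharts (V n) M)
    (ρ : Γ →* Equiv.Perm M) (hρ : ∀ γ : Γ, CAnalytic (V n) (V n) ⇑(ρ γ))
    (x₀ : M) (hfix : ∀ γ : Γ, ρ γ x₀ = x₀)
    (r : Γ → V n → V n)
    (hr : ∀ γ : Γ, r γ = fun u =>
      mfderiv (modelWithCornersSelf ℝ (V n)) (modelWithCornersSelf ℝ (V n)) (ρ γ) x₀ u)
    (φ : V n → M) (hφ : IsLocalLinearization φ x₀)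
    (hconj : ∀ γ : Γ, ∀ᶠ u in 𝓝 (0 : V n), φ (r γ u) = ρ γ (φ u)) :
    ∃ ℰ : Set (V n),
      (StarShapedZero ℰ ∧ IsOpen ℰ ∧ (0 : V n) ∈ ℰ ∧ ExtendsAsLocalAnaDiffeo φ ℰ) ∧
      (∀ ℰ' : Set (V n), StarShapedZero ℰ' → IsOpen ℰ' → (0 : V n) ∈ ℰ' →
        ExtendsAsLocalAnaDiffeo φ ℰ' → ℰ' ⊆ ℰ) ∧
      (∀ γ : Γ, ∀ u ∈ ℰ, r γ u ∈ ℰ) ∧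
      ∃ φbar : V n → M, (∀ᶠ u in 𝓝 (0 : V n), φbar u = φ u) ∧
        LocalAnaDiffeoOn (V n) (V n) φbar ℰ ∧
        ∀ γ : Γ, ∀ u ∈ ℰ, φbar (r γ u) = ρ γ (φbar u) :=
  statement_0_general n Γ M ρ hρ x₀ hfix r hr φ hφ hconj
end Zeghib
end
end

section
/- Let n ≥ 3 and let Γ be a finite-index subgroup of SL(n,ℤ), acting linearly on ℝⁿ. For every v ∈ ℝⁿ∖{0}, the orbit Γ·v is either dense in ℝⁿ or discrete; and it is discrete exactly when v = λu for some λ ∈ ℝ and some rational vector u ∈ ℚⁿ∖{0}. -/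
open Set Filter Topology MeasureTheory Matrix Function
noncomputable section
namespace Zeghib

abbrev SLR (n : ℕ) := Matrix.SpecialLinearGroup (Fin n) ℝ
abbrev SLZ (n : ℕ) := Matrix.SpecialLinearGroup (Fin n) ℤ

/-- The topology on `SL(n,ℝ)` induced from the space of matrices. -/
instance {n : ℕ} : TopologicalSpace (SLR n) :=
  TopologicalSpace.induced (fun g => (g : Matrix (Fin n) (Fin n) ℝ)) inferInstance

/-- The linear action of `SL(n,ℝ)` on `ℝⁿ`. -/
def lact {n : ℕ} (γ : SLR n) (u : V n) : V n := (γ : Matrix (Fin n) (Fin n) ℝ).mulVec u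

lemma lact_mul {n : ℕ} (A B : SLR n) (v : V n) : lact (A * B) v = lact A (lact B v) := by
  simp only [lact, Matrix.SpecialLinearGroup.coe_mul]
  rw [Matrix.mulVec_mulVec]

lemma lact_one {n : ℕ} (v : V n) : lact (1 : SLR n) v = v := by
  simp [lact]

/-- The coefficient-wise embedding `SL(n,ℤ) →* SL(n,ℝ)`. -/
def slCast {n : ℕ} : SLZ n →* SLR n := Matrix.SpecialLinearGroup.map (Int.castRingHom ℝ)

/-- `SL(n,ℤ)` viewed as a subgroup of `SL(n,ℝ)`. -/
def SLZR (n : ℕ) : Subgroup (SLR n) := MonoidHom.range (slCast (n := n))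

/-- A subgroup `Δ` of a topological group `G` is a lattice if it is discrete and the
quotient `G ⧸ Δ` carries a nonzero finite `G`-invariant (Borel) measure. -/
def IsLatticeIn (G : Type*) [Group G] [TopologicalSpace G] (Δ : Subgroup G) : Prop :=
  DiscreteTopology Δ ∧
    letI : MeasurableSpace (G ⧸ Δ) := borel _
    ∃ μ : Measure (G ⧸ Δ), μ ≠ 0 ∧ IsFiniteMeasure μ ∧
      ∀ g : G, Measure.map (fun x => g • x) μ = μ

/-- `Γ ≤ SL(n,ℝ)` is, up to an automorphism of (the topological group) `SL(n,ℝ)`,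
a finite-index subgroup of `SL(n,ℤ)`. -/
def UpToAutoFiniteIndexSLZ {n : ℕ} (Γ : Subgroup (SLR n)) : Prop :=
  ∃ σ : SLR n ≃* SLR n, Continuous σ ∧ Continuous σ.symm ∧
    Γ.map σ.toMonoidHom ≤ SLZR n ∧ ((Γ.map σ.toMonoidHom).subgroupOf (SLZR n)).FiniteIndex

/-- A subset of a topological space is discrete if each of its points is isolated in it. -/
def IsDiscreteSet {X : Type*} [TopologicalSpace X] (S : Set X) : Prop :=
  ∀ w ∈ S, ∃ U ∈ 𝓝 w, U ∩ S ⊆ {w}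

/-!
If `v` is a real multiple of a rational vector, clearing denominators puts its orbit inside a
scaled copy of `ℤⁿ`, which is discrete.

Otherwise some ratio `v j / v k` is irrational. A finite-index subgroup of `SL(n,ℤ)` contains the
transvections `1 + m E_ij`, `1 + m' E_ik` for some `m, m' ≠ 0`; they shift the `i`-th coordinate
by `p m v j + q m' v k` (`p, q ∈ ℤ`), and these shifts form a dense subgroup of `ℝ`. Hence every
closed invariant set containing such a vector contains the whole line through it in direction
`e_i`. Moving along these lines while keeping some coordinate ratio irrational (here `n ≥ 3` is
needed, and closedness lets us avoid the countably many bad values) reaches every vector, so the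
orbit is dense.
-/

section Transvection

open Matrix.SpecialLinearGroup

variable {ι R : Type*} [DecidableEq ι] [Fintype ι] [CommRing R]

def transvectionHom {i j : ι} (hij : i ≠ j) :
    Multiplicative R →* Matrix.SpecialLinearGroup ι R where
  toFun b := transvection hij b.toAdd
  map_one' := transvection_coeff_zero hij
  map_mul' b c := transvection_add hij b.toAdd c.toAdd

lemma transvection_zsmul {i j : ι} (hij : i ≠ j) (z : ℤ) (b : R) :
    transvection hij (z • b) = transvection hij b ^ z :=
  map_zpow (transvectionHom hij) (Multiplicative.ofAdd b) z

lemma exists_forall_transvection_mem {Γ : Subgroup (Matrix.SpecialLinearGroup ι R)}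
    (hΓ : Γ.FiniteIndex) {i j : ι} (hij : i ≠ j) :
    ∃ m : ℤ, m ≠ 0 ∧ ∀ p : ℤ, transvection hij ((m * p : ℤ) : R) ∈ Γ := by
  obtain ⟨m, hm, -, hmem⟩ :=
    Γ.exists_pow_mem_of_index_ne_zero hΓ.index_ne_zero (transvection hij 1)
  refine ⟨m, by omega, fun p => ?_⟩
  rw [← zsmul_one, transvection_zsmul, _root_.zpow_mul, zpow_natCast]
  exact Γ.zpow_mem hmem p

end Transvection

open Matrix.SpecialLinearGroup in
lemma lact_slCast_transvection {n : ℕ} {i j : Fin n} (hij : i ≠ j) (c : ℤ) (x : V n) :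
    lact (slCast (transvection hij c)) x = update x i (x i + c * x j) := by
  have hcast : slCast (transvection hij c) = transvection hij (c : ℝ) := by
    ext a b
    simp [slCast, transvection_coe, Matrix.single_apply, Matrix.one_apply]
  ext l
  rw [hcast, lact, transvection_coe, Matrix.add_mulVec, Matrix.one_mulVec, single_mulVec_eq]
  rcases eq_or_ne l i with rfl | hl
  · simp
  · simp [hl]

section Lattice

variable {ι : Type*} [Fintype ι]

lemma isDiscreteSet_of_subset_zmultiples {c : ℝ} (hc : c ≠ 0) {S : Set (ι → ℝ)}
    (hS : ∀ w ∈ S, ∀ i, ∃ z : ℤ, w i = z * c) : IsDiscreteSet S := by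
  intro w hw
  refine ⟨Metric.ball w |c|, Metric.ball_mem_nhds w (abs_pos.mpr hc), ?_⟩
  rintro x ⟨hxw, hx⟩
  refine funext fun i => ?_
  obtain ⟨a, ha⟩ := hS x hx i
  obtain ⟨b, hb⟩ := hS w hw i
  have hlt : |(a - b : ℝ)| * |c| < 1 * |c| := by
    rw [← abs_mul, sub_mul, ← ha, ← hb, one_mul, ← Real.dist_eq]
    exact (dist_le_pi_dist x w i).trans_lt hxw
  have hab : |a - b| < 1 := by
    exact_mod_cast lt_of_mul_lt_mul_right hlt (abs_nonneg c)
  rw [ha, hb, show a = b by rw [abs_lt] at hab; omega]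

lemma exists_eq_smul_intCast_of_eq_smul_ratCast {v : ι → ℝ} {lam : ℝ} {u : ι → ℚ}
    (hvu : v = lam • fun i => (u i : ℝ)) :
    ∃ (b : ℤ) (z : ι → ℤ), b ≠ 0 ∧ v = (lam / b) • fun i => (z i : ℝ) := by
  obtain ⟨⟨b, hb⟩, hz⟩ := IsLocalization.exist_integer_multiples_of_finite (nonZeroDivisors ℤ) u
  choose z hz using hz
  have hb0 : b ≠ 0 := nonZeroDivisors.ne_zero hb
  refine ⟨b, z, hb0, funext fun i => ?_⟩
  have hzi : (z i : ℝ) = b * u i := by exact_mod_cast hz i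
  simp only [hvu, Pi.smul_apply, smul_eq_mul, hzi]
  field_simp

end Lattice

section Orbit

variable {n : ℕ}

def orbit (Γ : Subgroup (SLZ n)) (v : V n) : Set (V n) :=
  {w : V n | ∃ γ ∈ Γ, lact (slCast γ) v = w}

lemma mem_orbit_self (Γ : Subgroup (SLZ n)) (v : V n) : v ∈ orbit Γ v :=
  ⟨1, Γ.one_mem, by rw [map_one, lact_one]⟩

lemma lact_slCast_smul_intCast (γ : SLZ n) (c : ℝ) (z : Fin n → ℤ) :
    lact (slCast γ) (c • fun i => (z i : ℝ)) = c • fun i => ((γ.1 *ᵥ z) i : ℝ) := by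
  ext i
  rw [lact, Matrix.mulVec_smul, Pi.smul_apply, Pi.smul_apply, ← eq_intCast (Int.castRingHom ℝ),
    RingHom.map_mulVec]
  rfl

lemma isDiscreteSet_orbit_of_eq_smul_ratCast (Γ : Subgroup (SLZ n)) {v : V n} (hv : v ≠ 0)
    {lam : ℝ} {u : Fin n → ℚ} (hvu : v = lam • fun i => (u i : ℝ)) :
    IsDiscreteSet (orbit Γ v) := by
  obtain ⟨b, z, hb, rfl⟩ := exists_eq_smul_intCast_of_eq_smul_ratCast hvu
  refine isDiscreteSet_of_subset_zmultiples (c := lam / b) ?_ ?_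
  · intro hc
    exact hv (by rw [hc, zero_smul])
  · rintro _ ⟨γ, -, rfl⟩ i
    exact ⟨(γ.1 *ᵥ z) i, by rw [lact_slCast_smul_intCast, Pi.smul_apply, smul_eq_mul, mul_comm]⟩

end Orbit

lemma ne_of_irrational_div {ι : Type*} {x : ι → ℝ} {j k : ι} (h : Irrational (x j / x k)) :
    j ≠ k := by
  rintro rfl
  exact h.ne_one (div_self (div_ne_zero_iff.mp h.ne_zero).1)

lemma countable_setOf_not_irrational_div {a : ℝ} (ha : a ≠ 0) :
    {t : ℝ | ¬Irrational (a / t)}.Countable := by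
  refine (countable_range fun q : ℚ => a / q).mono fun t ht => ?_
  obtain ⟨q, hq⟩ := not_not.mp ht
  exact ⟨q, by simp only [hq, div_div_cancel₀ ha]⟩

lemma mem_of_forall_update_mem {ι : Type*} [DecidableEq ι] {O : Set (ι → ℝ)} (hO : IsClosed O)
    {C : Set ℝ} (hC : C.Countable) (x : ι → ℝ) (i : ι) (h : ∀ t ∉ C, update x i t ∈ O) :
    x ∈ O := by
  have hline : closure Cᶜ ⊆ update x i ⁻¹' O :=
    (hO.preimage (continuous_const.update i continuous_id)).closure_subset_iff.mpr h
  have hx := hline ((hC.dense_compl ℝ).closure_eq ▸ mem_univ (x i))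
  rwa [mem_preimage, update_eq_self] at hx

section Invariant

variable {n : ℕ}

def IsInvariant (Γ : Subgroup (SLZ n)) (O : Set (V n)) : Prop :=
  ∀ γ ∈ Γ, ∀ w ∈ O, lact (slCast γ) w ∈ O

lemma isInvariant_closure_orbit (Γ : Subgroup (SLZ n)) (v : V n) :
    IsInvariant Γ (closure (orbit Γ v)) := by
  intro γ hγ w hw
  refine map_mem_closure (Continuous.matrix_mulVec continuous_const continuous_id) hw ?_
  rintro _ ⟨δ, hδ, rfl⟩
  exact ⟨γ * δ, Γ.mul_mem hγ hδ, by rw [map_mul, lact_mul]⟩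

variable {Γ : Subgroup (SLZ n)} {O : Set (V n)}

lemma update_mem_of_irrational (hO : IsClosed O) (hΓO : IsInvariant Γ O) (hΓ : Γ.FiniteIndex)
    {w : V n} (hw : w ∈ O) {i j k : Fin n} (hij : i ≠ j) (hik : i ≠ k)
    (hirr : Irrational (w j / w k)) (t : ℝ) : update w i t ∈ O := by
  obtain ⟨m₁, hm₁, hΓ₁⟩ := exists_forall_transvection_mem hΓ hij
  obtain ⟨m₂, hm₂, hΓ₂⟩ := exists_forall_transvection_mem hΓ hik
  have hdense : Dense (AddSubgroup.closure {m₁ * w j, m₂ * w k} : Set ℝ) := by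
    rw [dense_addSubgroupClosure_pair_iff, mul_div_mul_comm,
      show (m₁ / m₂ : ℝ) = ((m₁ / m₂ : ℚ) : ℝ) by push_cast; rfl]
    exact hirr.ratCast_mul (div_ne_zero (Int.cast_ne_zero.mpr hm₁) (Int.cast_ne_zero.mpr hm₂))
  have hsub : (AddSubgroup.closure {m₁ * w j, m₂ * w k} : Set ℝ) ⊆
      (fun s => update w i (w i + s)) ⁻¹' O := by
    intro s hs
    obtain ⟨p, q, rfl⟩ := AddSubgroup.mem_closure_pair.mp hs
    have hmem := hΓO _ (Γ.mul_mem (hΓ₁ p) (hΓ₂ q)) w hw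
    rw [map_mul, lact_mul, lact_slCast_transvection, lact_slCast_transvection, update_self,
      update_of_ne hij.symm, update_idem] at hmem
    rw [mem_preimage]
    convert hmem using 2
    push_cast [zsmul_eq_mul]
    ring
  have hline := (hO.preimage (by fun_prop)).closure_subset_iff.mpr hsub
  have ht := hline (hdense.closure_eq ▸ mem_univ (t - w i))
  rwa [mem_preimage, add_sub_cancel] at ht

lemma mem_of_apply_eq_apply_eq_of_irrational (hO : IsClosed O) (hΓO : IsInvariant Γ O)
    (hΓ : Γ.FiniteIndex) {w : V n} (hw : w ∈ O) {j k : Fin n} (hirr : Irrational (w j / w k))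
    {x : V n} (hxj : x j = w j) (hxk : x k = w k) : x ∈ O := by
  suffices ∀ s : Finset (Fin n), j ∉ s → k ∉ s → ∀ x : V n, (∀ l ∉ s, x l = w l) → x ∈ O from
    this {l | x l ≠ w l} (by simp [hxj]) (by simp [hxk]) x (by simp)
  intro s
  induction s using Finset.induction_on with
  | empty =>
    intro _ _ x hx
    rwa [funext fun l => hx l (Finset.notMem_empty l)]
  | insert i s hi ih =>
    intro hj hk x hx
    have hij : i ≠ j := fun h => hj (h ▸ Finset.mem_insert_self i s)
    have hik : i ≠ k := fun h => hk (h ▸ Finset.mem_insert_self i s)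
    have hy : update x i (w i) ∈ O := by
      refine ih (fun h => hj (Finset.mem_insert_of_mem h))
        (fun h => hk (Finset.mem_insert_of_mem h)) _ fun l hl => ?_
      rcases eq_or_ne l i with rfl | hli
      · exact update_self ..
      · rw [update_of_ne hli]
        exact hx l (by simp [hli, hl])
    have hirr' : Irrational (update x i (w i) j / update x i (w i) k) := by
      rwa [update_of_ne hij.symm, update_of_ne hik.symm, hx j hj, hx k hk]
    simpa using update_mem_of_irrational hO hΓO hΓ hy hij hik hirr' (x i)

lemma mem_of_apply_eq_of_irrational (hn : 3 ≤ n) (hO : IsClosed O) (hΓO : IsInvariant Γ O)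
    (hΓ : Γ.FiniteIndex) {w : V n} (hw : w ∈ O) {j k : Fin n} (hirr : Irrational (w j / w k))
    {x : V n} (hxk : x k = w k) : x ∈ O := by
  have hjk := ne_of_irrational_div hirr
  obtain ⟨i, hij, hik⟩ := Fin.exists_ne_and_ne_of_two_lt j k (by omega)
  have hwk : w k ≠ 0 := (div_ne_zero_iff.mp hirr.ne_zero).2
  refine mem_of_forall_update_mem hO (countable_setOf_not_irrational_div hwk) x i fun t ht => ?_
  set y := update (update x i t) j (w j)
  have hy : y ∈ O := mem_of_apply_eq_apply_eq_of_irrational hO hΓO hΓ hw hirr (by simp [y])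
    (by simp [y, hjk.symm, hik.symm, hxk])
  have hirr' : Irrational (y k / y i) := by
    simpa [y, hjk.symm, hik.symm, hij, hxk] using ht
  exact mem_of_apply_eq_apply_eq_of_irrational hO hΓO hΓ hy hirr' (by simp [y, hjk.symm])
    (by simp [y, hij])

lemma eq_univ_of_irrational (hn : 3 ≤ n) (hO : IsClosed O) (hΓO : IsInvariant Γ O)
    (hΓ : Γ.FiniteIndex) {w : V n} (hw : w ∈ O) {j k : Fin n} (hirr : Irrational (w j / w k)) :
    O = univ := by
  obtain ⟨i, -, hik⟩ := Fin.exists_ne_and_ne_of_two_lt j k (by omega)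
  have hwk : w k ≠ 0 := (div_ne_zero_iff.mp hirr.ne_zero).2
  refine eq_univ_of_forall fun x =>
    mem_of_forall_update_mem hO (countable_setOf_not_irrational_div hwk) x i fun t ht => ?_
  set y := update (update x i t) k (w k)
  have hy : y ∈ O := mem_of_apply_eq_of_irrational hn hO hΓO hΓ hw hirr (by simp [y])
  have hirr' : Irrational (y k / y i) := by
    simpa [y, hik] using ht
  exact mem_of_apply_eq_of_irrational hn hO hΓO hΓ hy hirr' (by simp [y, hik])

lemma dense_orbit_of_irrational (hn : 3 ≤ n) (hΓ : Γ.FiniteIndex) {v : V n} {j k : Fin n}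
    (hirr : Irrational (v j / v k)) : Dense (orbit Γ v) :=
  dense_iff_closure_eq.mpr <| eq_univ_of_irrational hn isClosed_closure
    (isInvariant_closure_orbit Γ v) hΓ (subset_closure (mem_orbit_self Γ v)) hirr

end Invariant

lemma not_isDiscreteSet_of_dense {X : Type*} [TopologicalSpace X] [T1Space X]
    [∀ x : X, (𝓝[≠] x).NeBot] {S : Set X} (hS : Dense S) (hne : S.Nonempty) :
    ¬IsDiscreteSet S := by
  intro hdisc
  obtain ⟨w, hw⟩ := hne
  obtain ⟨U, hU, hUS⟩ := hdisc w hw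
  obtain ⟨x, ⟨hxS, hxw⟩, hxU⟩ := (hS.sdiff_singleton w).inter_nhds_nonempty hU
  exact hxw (hUS ⟨hxU, hxS⟩)

lemma exists_eq_smul_ratCast_iff {ι : Type*} {v : ι → ℝ} (hv : v ≠ 0) :
    (∃ (lam : ℝ) (u : ι → ℚ), u ≠ 0 ∧ v = lam • fun i => (u i : ℝ)) ↔
      ∀ j k, ¬Irrational (v j / v k) := by
  constructor
  · rintro ⟨lam, u, -, rfl⟩ j k
    rcases eq_or_ne lam 0 with rfl | hlam
    · simp
    · simp [mul_div_mul_left _ _ hlam]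
  · intro hrat
    obtain ⟨k, hk⟩ := Function.ne_iff.mp hv
    choose u hu using fun j => not_not.mp (hrat j k)
    refine ⟨v k, u, fun hu0 => ?_, funext fun j => ?_⟩
    · simpa [hu0, div_self hk] using hu k
    · simp [hu j, mul_div_cancel₀ _ hk]

/-- Let `n ≥ 3` and `Γ` a finite-index subgroup of `SL(n,ℤ)` acting
linearly on `ℝⁿ`. The orbit of any nonzero vector `v` is dense or discrete, and it is
discrete exactly when `v` is a real multiple of a nonzero rational vector. -/
theorem statement_2 (n : ℕ) (hn : 3 ≤ n) (Γ : Subgroup (SLZ n)) (hΓ : Γ.FiniteIndex)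
    (v : V n) (hv : v ≠ 0) :
    (Dense {w : V n | ∃ γ ∈ Γ, lact (slCast γ) v = w} ∨
      IsDiscreteSet {w : V n | ∃ γ ∈ Γ, lact (slCast γ) v = w}) ∧
    (IsDiscreteSet {w : V n | ∃ γ ∈ Γ, lact (slCast γ) v = w} ↔
      ∃ (lam : ℝ) (u : Fin n → ℚ), u ≠ 0 ∧ v = lam • fun i => ((u i : ℝ))) := by
  change (Dense (orbit Γ v) ∨ IsDiscreteSet (orbit Γ v)) ∧ (IsDiscreteSet (orbit Γ v) ↔ _)
  by_cases hrat : ∃ (lam : ℝ) (u : Fin n → ℚ), u ≠ 0 ∧ v = lam • fun i => (u i : ℝ)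
  · obtain ⟨lam, u, hu, hvu⟩ := hrat
    have hdisc := isDiscreteSet_orbit_of_eq_smul_ratCast Γ hv hvu
    exact ⟨.inr hdisc, iff_of_true hdisc ⟨lam, u, hu, hvu⟩⟩
  · obtain ⟨j, k, hirr⟩ : ∃ j k, Irrational (v j / v k) := by
      simpa using (exists_eq_smul_ratCast_iff hv).not.mp hrat
    have : Nonempty (Fin n) := ⟨j⟩
    have hdense := dense_orbit_of_irrational hn hΓ hirr
    exact ⟨.inl hdense,
      iff_of_false (not_isDiscreteSet_of_dense hdense ⟨v, mem_orbit_self Γ v⟩) hrat⟩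

end Zeghib
end
end
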